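/- arXiv:1504.02998 — 3 statements merged into one kernel-verified Lean document; each statement's English description precedes it below -/
import Mathlib

section
/- Let Γ = ⟨α_1, …, α_k⟩ ⊂ ℕ^d be an affine semigroup minimally generated by α_1, …, α_k, and let ρ ⊂ ℕ^k × ℕ^k be a minimal presentation of Γ. If Δ(Γ) is nonempty, then min Δ(Γ) = gcd{ ||z| − |w|| : (z,w) ∈ ρ }. -/
open Finset

/-- The factorization homomorphism `φ_Γ : ℕ^k → ℕ^d` determined by the
generators `α 1, …, α k`. -/
def phi {d k : ℕ} (α : Fin k → Fin d → ℕ) (z : Fin k → ℕ) : Fin d → ℕ :=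
  ∑ i, z i • α i

/-- The length `|z|` of a factorization. -/
def len {k : ℕ} (z : Fin k → ℕ) : ℕ := ∑ i, z i

/-- The length set `L_Γ(γ)`. -/
def lengthSet {d k : ℕ} (α : Fin k → Fin d → ℕ) (γ : Fin d → ℕ) : Set ℕ :=
  len '' {z | phi α z = γ}

/-- The set of successive differences (gaps) of a set of naturals. -/
def deltaOf (L : Set ℕ) : Set ℕ :=
  {δ | 0 < δ ∧ ∃ a, a ∈ L ∧ a + δ ∈ L ∧ ∀ c ∈ L, ¬(a < c ∧ c < a + δ)}

/-- The delta set `Δ(Γ)` of the affine semigroup generated by `α`. -/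
def deltaSet {d k : ℕ} (α : Fin k → Fin d → ℕ) : Set ℕ :=
  ⋃ γ ∈ Set.range (phi α), deltaOf (lengthSet α γ)

/-- The kernel congruence `ker φ_Γ = {(z,w) : φ_Γ(z) = φ_Γ(w)}`. -/
def kerCon {d k : ℕ} (α : Fin k → Fin d → ℕ) : AddCon (Fin k → ℕ) where
  r x y := phi α x = phi α y
  iseqv := ⟨fun _ => rfl, Eq.symm, Eq.trans⟩
  add' := by
    intro a b c e h1 h2
    show phi α (a + c) = phi α (b + e)
    have hadd : ∀ u v : Fin k → ℕ, phi α (u + v) = phi α u + phi α v := by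
      intro u v
      simp [phi, add_smul, Finset.sum_add_distrib]
    rw [hadd, hadd, h1, h2]

/-!
Let `D` be the gcd of the length differences `||z| - |w||` over `ρ`. Congruence of lengths
modulo `D` is a congruence on `ℕ^k` containing `ρ`, hence containing `ker φ_Γ`: all
factorizations of a common element have lengths congruent mod `D`, so `D` divides every
element of `Δ(Γ)`. Conversely, by Bézout `D` is an integer combination of the differences
`|z| - |w|` over `ρ`, and these form a subgroup of `ℤ`, so `D = |u| - |v|` for two
factorizations `u, v` of one element; no length lies strictly between `|v|` and `|u|`,
so `D ∈ Δ(Γ)`. If `D = 0`, all lengths of factorizations of each element agree and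
`Δ(Γ) = ∅`, matching `sInf ∅ = 0`.
-/

theorem phi_add {d k : ℕ} (α : Fin k → Fin d → ℕ) (u v : Fin k → ℕ) :
    phi α (u + v) = phi α u + phi α v := by
  simp [phi, add_smul, Finset.sum_add_distrib]

theorem len_add {k : ℕ} (u v : Fin k → ℕ) : len (u + v) = len u + len v := by
  simp [len, Finset.sum_add_distrib]

theorem Nat.modEq_of_dvd_dist {n a b : ℕ} (h : n ∣ Nat.dist a b) : a ≡ b [MOD n] := by
  rcases le_total a b with hab | hba
  · exact (Nat.modEq_iff_dvd' hab).2 (Nat.dist_eq_sub_of_le hab ▸ h)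
  · exact ((Nat.modEq_iff_dvd' hba).2 (Nat.dist_eq_sub_of_le_right hba ▸ h)).symm

theorem AddSubgroup.natCast_finsetGcd_mem {ι : Type*} (H : AddSubgroup ℤ) (s : Finset ι)
    (f : ι → ℕ) (h : ∀ i ∈ s, (f i : ℤ) ∈ H) : ((s.gcd f : ℕ) : ℤ) ∈ H := by
  classical
  induction s using Finset.induction_on with
  | empty => simp
  | insert i s _ ih =>
    have hi := h i (mem_insert_self i s)
    have hs := ih fun j hj => h j (mem_insert_of_mem hj)
    rw [gcd_insert, gcd_eq_nat_gcd, Nat.gcd_eq_gcd_ab]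
    exact add_mem (by simpa [zsmul_eq_mul, mul_comm] using H.zsmul_mem hi (Nat.gcdA _ _))
      (by simpa [zsmul_eq_mul, mul_comm] using H.zsmul_mem hs (Nat.gcdB _ _))

section Lengths

variable {d k : ℕ} (α : Fin k → Fin d → ℕ)

def lenModCon (k n : ℕ) : AddCon (Fin k → ℕ) where
  r x y := len x ≡ len y [MOD n]
  iseqv := ⟨fun _ => Nat.ModEq.refl _, Nat.ModEq.symm, Nat.ModEq.trans⟩
  add' h₁ h₂ := by
    simp only [len_add]
    exact h₁.add h₂

theorem len_modEq_of_phi_eq {r : (Fin k → ℕ) → (Fin k → ℕ) → Prop} {n : ℕ}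
    (hr : addConGen r = kerCon α) (hn : ∀ x y, r x y → len x ≡ len y [MOD n])
    {z w : Fin k → ℕ} (h : phi α z = phi α w) : len z ≡ len w [MOD n] :=
  (AddCon.addConGen_le (c := lenModCon k n)).2 hn (hr ▸ h)

def lengthDiffs : AddSubgroup ℤ where
  carrier := {m | ∃ u v : Fin k → ℕ, phi α u = phi α v ∧ (len u : ℤ) - len v = m}
  zero_mem' := ⟨0, 0, rfl, sub_self _⟩
  add_mem' := by
    rintro _ _ ⟨u, v, huv, rfl⟩ ⟨u', v', huv', rfl⟩
    refine ⟨u + u', v + v', by rw [phi_add, phi_add, huv, huv'], ?_⟩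
    push_cast [len_add]
    ring
  neg_mem' := by
    rintro _ ⟨u, v, huv, rfl⟩
    exact ⟨v, u, huv.symm, by ring⟩

theorem natCast_dist_mem_lengthDiffs {u v : Fin k → ℕ} (h : phi α u = phi α v) :
    ((Nat.dist (len u) (len v) : ℕ) : ℤ) ∈ lengthDiffs α := by
  rcases le_total (len u) (len v) with huv | hvu
  · exact ⟨v, u, h.symm, by rw [Nat.dist_eq_sub_of_le huv]; push_cast [huv]; ring⟩
  · exact ⟨u, v, h, by rw [Nat.dist_eq_sub_of_le_right hvu]; push_cast [hvu]; ring⟩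

end Lengths

section Delta

variable {L : Set ℕ} {n : ℕ}

theorem dvd_of_mem_deltaOf (hL : ∀ a ∈ L, ∀ b ∈ L, a ≡ b [MOD n]) {δ : ℕ}
    (hδ : δ ∈ deltaOf L) : n ∣ δ := by
  obtain ⟨-, a, ha, haδ, -⟩ := hδ
  simpa using (Nat.modEq_iff_dvd' (Nat.le_add_right a δ)).1 (hL a ha _ haδ)

theorem mem_deltaOf_of_modEq (hL : ∀ a ∈ L, ∀ b ∈ L, a ≡ b [MOD n]) (hn : 0 < n) {a : ℕ}
    (ha : a ∈ L) (han : a + n ∈ L) : n ∈ deltaOf L := by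
  refine ⟨hn, a, ha, han, fun c hc ⟨hac, hca⟩ => ?_⟩
  have hdvd : n ∣ c - a := (Nat.modEq_iff_dvd' hac.le).1 (hL a ha c hc)
  have := Nat.le_of_dvd (Nat.sub_pos_of_lt hac) hdvd
  omega

variable {d k : ℕ} {α : Fin k → Fin d → ℕ}

theorem lengthSet_modEq (hmod : ∀ z w, phi α z = phi α w → len z ≡ len w [MOD n])
    (γ : Fin d → ℕ) : ∀ a ∈ lengthSet α γ, ∀ b ∈ lengthSet α γ, a ≡ b [MOD n] := by
  rintro _ ⟨z, hz, rfl⟩ _ ⟨w, hw, rfl⟩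
  exact hmod z w (hz.trans hw.symm)

theorem dvd_of_mem_deltaSet (hmod : ∀ z w, phi α z = phi α w → len z ≡ len w [MOD n])
    {δ : ℕ} (hδ : δ ∈ deltaSet α) : n ∣ δ := by
  obtain ⟨γ, -, hδ⟩ := Set.mem_iUnion₂.1 hδ
  exact dvd_of_mem_deltaOf (lengthSet_modEq hmod γ) hδ

theorem pos_of_mem_deltaSet {δ : ℕ} (hδ : δ ∈ deltaSet α) : 0 < δ := by
  obtain ⟨γ, -, hδ⟩ := Set.mem_iUnion₂.1 hδ
  exact hδ.1

theorem mem_deltaSet_of_modEq (hmod : ∀ z w, phi α z = phi α w → len z ≡ len w [MOD n])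
    (hn : 0 < n) {u v : Fin k → ℕ} (huv : phi α u = phi α v) (hlen : len u = len v + n) :
    n ∈ deltaSet α :=
  Set.mem_iUnion₂.2 ⟨phi α u, ⟨u, rfl⟩, mem_deltaOf_of_modEq (lengthSet_modEq hmod _) hn
    ⟨v, huv.symm, rfl⟩ ⟨u, rfl, hlen⟩⟩

end Delta

theorem stmt0_general {d k : ℕ} (α : Fin k → Fin d → ℕ)
    (ρ : Finset ((Fin k → ℕ) × (Fin k → ℕ)))
    (hρgen : addConGen (fun x y => (x, y) ∈ ρ) = kerCon α) :
    sInf (deltaSet α) = ρ.gcd fun p => Nat.dist (len p.1) (len p.2) := by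
  set D := ρ.gcd fun p => Nat.dist (len p.1) (len p.2)
  have hρker : ∀ p ∈ ρ, phi α p.1 = phi α p.2 := fun p hp =>
    show kerCon α p.1 p.2 from hρgen ▸ AddConGen.Rel.of _ _ hp
  have hlen : ∀ z w, phi α z = phi α w → len z ≡ len w [MOD D] := fun _ _ =>
    len_modEq_of_phi_eq α hρgen fun x y hxy => Nat.modEq_of_dvd_dist (gcd_dvd hxy)
  rcases Nat.eq_zero_or_pos D with hD | hD
  · refine hD ▸ Nat.sInf_eq_zero.2 (Or.inr (Set.eq_empty_of_forall_notMem fun δ hδ => ?_))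
    have hδ0 : δ = 0 := by simpa [hD] using dvd_of_mem_deltaSet hlen hδ
    exact (pos_of_mem_deltaSet hδ).ne' hδ0
  · obtain ⟨u, v, huv, hD'⟩ : (D : ℤ) ∈ lengthDiffs α :=
      (lengthDiffs α).natCast_finsetGcd_mem ρ _ fun p hp =>
        natCast_dist_mem_lengthDiffs α (hρker p hp)
    refine IsLeast.csInf_eq ⟨mem_deltaSet_of_modEq hlen hD huv (by omega), fun δ hδ => ?_⟩
    exact Nat.le_of_dvd (pos_of_mem_deltaSet hδ) (dvd_of_mem_deltaSet hlen hδ)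

/-- If `Γ = ⟨α_1,…,α_k⟩ ⊂ ℕ^d` is minimally generated by `α_1,…,α_k`, `ρ` is a
minimal presentation of `Γ`, and `Δ(Γ) ≠ ∅`, then
`min Δ(Γ) = gcd{ ||z|−|w|| : (z,w) ∈ ρ }`. -/
theorem stmt0 {d k : ℕ} (α : Fin k → Fin d → ℕ)
    (hne : ∀ i, α i ≠ 0)
    (hmin : ∀ i, α i ∉ AddSubmonoid.closure (α '' {j | j ≠ i}))
    (ρ : Finset ((Fin k → ℕ) × (Fin k → ℕ)))
    (hρgen : addConGen (fun x y => (x, y) ∈ ρ) = kerCon α)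
    (hρmin : ∀ ρ' ⊆ ρ, addConGen (fun x y => (x, y) ∈ ρ') = kerCon α → ρ' = ρ)
    (hΔ : (deltaSet α).Nonempty) :
    sInf (deltaSet α) = ρ.gcd fun p => Nat.dist (len p.1) (len p.2) :=
  stmt0_general α ρ hρgen
end

section
/- Let Γ = ⟨α_1, …, α_k⟩ ⊂ ℕ^d be an affine semigroup minimally generated by α_1, …, α_k, and let ρ ⊂ ℕ^k × ℕ^k be a minimal presentation of Γ. If Δ(Γ) is nonempty, then max Δ(Γ) = max{ max Δ(φ_Γ(z)) : (z,w) ∈ ρ and Δ(φ_Γ(z)) ≠ ∅ }. -/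
open Finset

namespace Stmt1Aux

variable {d k : ℕ}

lemma phi_add (α : Fin k → Fin d → ℕ) (u v : Fin k → ℕ) :
    phi α (u + v) = phi α u + phi α v := by
  simp [phi, add_smul, Finset.sum_add_distrib]

lemma len_add (u v : Fin k → ℕ) : len (u + v) = len u + len v := by
  simp [len, Finset.sum_add_distrib]

lemma len_mem (α : Fin k → Fin d → ℕ) (z : Fin k → ℕ) :
    len z ∈ lengthSet α (phi α z) := ⟨z, rfl, rfl⟩

lemma mem_shift (α : Fin k → Fin d → ℕ) {g : Fin d → ℕ} {c : ℕ}
    (h : c ∈ lengthSet α g) (v : Fin k → ℕ) :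
    c + len v ∈ lengthSet α (g + phi α v) := by
  obtain ⟨u, hu, rfl⟩ := h
  exact ⟨u + v, by simp only [Set.mem_setOf_eq, phi_add]; rw [hu], len_add u v⟩

lemma core {L : Set ℕ} {lo hi ℓ δ : ℕ} (hδ : 0 < δ) (hlo : lo ∈ L) (hhi : hi ∈ L)
    (h1 : lo ≤ ℓ) (h2 : ℓ + δ ≤ hi)
    (hgap : ∀ c ∈ L, ¬(ℓ < c ∧ c < ℓ + δ)) :
    ∃ δ' ∈ deltaOf L, δ ≤ δ' := by
  set A : Set ℕ := {x | x ∈ L ∧ x ≤ ℓ} with hA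
  set B : Set ℕ := {x | x ∈ L ∧ ℓ + δ ≤ x} with hB
  have hAne : A.Nonempty := ⟨lo, hlo, h1⟩
  have hAbdd : BddAbove A := ⟨ℓ, fun x hx => hx.2⟩
  have hBne : B.Nonempty := ⟨hi, hhi, h2⟩
  set a := sSup A with ha
  set b := sInf B with hb
  have haA : a ∈ A := Nat.sSup_mem hAne hAbdd
  have hbB : b ∈ B := Nat.sInf_mem hBne
  have hab : a ≤ ℓ := haA.2
  have hba : ℓ + δ ≤ b := hbB.2
  refine ⟨b - a, ⟨by omega, a, haA.1, ?_, ?_⟩, by omega⟩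
  · have : a + (b - a) = b := by omega
    rw [this]; exact hbB.1
  · intro c hc hcontra
    have hcb : a + (b - a) = b := by omega
    rw [hcb] at hcontra
    rcases le_or_gt c ℓ with h | h
    · have hle : c ≤ a := le_csSup hAbdd (show c ∈ A from ⟨hc, h⟩)
      omega
    · rcases le_or_gt (ℓ + δ) c with h' | h'
      · have hle : b ≤ c := Nat.sInf_le (show c ∈ B from ⟨hc, h'⟩)
        omega
      · exact hgap c hc ⟨h, h'⟩

variable (α : Fin k → Fin d → ℕ) (ρ : Finset ((Fin k → ℕ) × (Fin k → ℕ)))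
variable (hρgen : addConGen (fun x y => (x, y) ∈ ρ) = kerCon α)

include hρgen in
lemma relPhi {z w : Fin k → ℕ}
    (h : AddConGen.Rel (fun x y => (x, y) ∈ ρ) z w) :
    phi α z = phi α w := by
  have h' : (addConGen (fun x y => (x, y) ∈ ρ)) z w := h
  rw [hρgen] at h'
  exact h'

include hρgen in
lemma key {z w : Fin k → ℕ}
    (h : AddConGen.Rel (fun x y => (x, y) ∈ ρ) z w) :
    ∀ ℓ δ : ℕ, 0 < δ →
      (∀ c ∈ lengthSet α (phi α z), ¬(ℓ < c ∧ c < ℓ + δ)) →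
      ((len z ≤ ℓ ∧ ℓ + δ ≤ len w) ∨ (len w ≤ ℓ ∧ ℓ + δ ≤ len z)) →
      ∃ δ' ∈ ⋃ p ∈ (ρ : Set ((Fin k → ℕ) × (Fin k → ℕ))),
          deltaOf (lengthSet α (phi α p.1)), δ ≤ δ' := by
  induction h with
  | of x y hxy =>
    intro ℓ δ hδ hgap hor
    have hphi : phi α x = phi α y := relPhi α ρ hρgen (.of x y hxy)
    have hy : len y ∈ lengthSet α (phi α x) := hphi ▸ len_mem α y
    have hx : len x ∈ lengthSet α (phi α x) := len_mem α x
    have hcore : ∃ δ' ∈ deltaOf (lengthSet α (phi α x)), δ ≤ δ' := by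
      rcases hor with ⟨h1, h2⟩ | ⟨h1, h2⟩
      · exact core hδ hx hy h1 h2 hgap
      · exact core hδ hy hx h1 h2 hgap
    obtain ⟨δ', hδ', hle⟩ := hcore
    exact ⟨δ', Set.mem_biUnion (Finset.mem_coe.2 hxy) hδ', hle⟩
  | refl x =>
    intro ℓ δ hδ _ hor
    omega
  | symm h ih =>
    rename_i x y
    intro ℓ δ hδ hgap hor
    have hphi : phi α x = phi α y := relPhi α ρ hρgen h
    rw [← hphi] at hgap
    exact ih ℓ δ hδ hgap hor.symm
  | trans h1 h2 ih1 ih2 =>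
    rename_i x y z'
    intro ℓ δ hδ hgap hor
    have hphi1 : phi α x = phi α y := relPhi α ρ hρgen h1
    have hy : len y ∈ lengthSet α (phi α x) := hphi1 ▸ len_mem α y
    have hgap2 : ∀ c ∈ lengthSet α (phi α y), ¬(ℓ < c ∧ c < ℓ + δ) := by
      rw [← hphi1]; exact hgap
    have hycase : len y ≤ ℓ ∨ ℓ + δ ≤ len y := by
      have := hgap _ hy; omega
    rcases hor with ⟨ha, hb⟩ | ⟨ha, hb⟩
    · rcases hycase with hc | hc
      · exact ih2 ℓ δ hδ hgap2 (Or.inl ⟨hc, hb⟩)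
      · exact ih1 ℓ δ hδ hgap (Or.inl ⟨ha, hc⟩)
    · rcases hycase with hc | hc
      · exact ih1 ℓ δ hδ hgap (Or.inr ⟨hc, hb⟩)
      · exact ih2 ℓ δ hδ hgap2 (Or.inr ⟨ha, hc⟩)
  | add h1 h2 ih1 ih2 =>
    rename_i x y x' y'
    intro ℓ δ hδ hgap hor
    have hphi1 : phi α x = phi α y := relPhi α ρ hρgen h1
    -- shifted gap conditions
    have hgapx : ∀ c ∈ lengthSet α (phi α x), c + len x' ∈ lengthSet α (phi α (x + x')) := by
      intro c hc
      rw [phi_add]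
      exact mem_shift α hc x'
    have hgapx' : ∀ c ∈ lengthSet α (phi α x'), c + len y ∈ lengthSet α (phi α (x + x')) := by
      intro c hc
      have : phi α (x + x') = phi α x' + phi α y := by
        rw [phi_add, hphi1, add_comm]
      rw [this]
      exact mem_shift α hc y
    have hax : len x + len x' = len (x + x') := (len_add x x').symm
    have hay : len y + len y' = len (y + y') := (len_add y y').symm
    have hmid : len y + len x' ∈ lengthSet α (phi α (x + x')) := by
      have hyy : len y ∈ lengthSet α (phi α x) := hphi1 ▸ len_mem α y
      exact hgapx _ hyy
    have hmidcase : len y + len x' ≤ ℓ ∨ ℓ + δ ≤ len y + len x' := by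
      have := hgap _ hmid; omega
    rcases hor with ⟨ha, hb⟩ | ⟨ha, hb⟩
    · rw [← hax] at ha; rw [← hay] at hb
      rcases hmidcase with hc | hc
      · -- use ih2 shifted by len y
        refine ih2 (ℓ - len y) δ hδ ?_ (Or.inl ⟨by omega, by omega⟩)
        intro c hcL
        have := hgap _ (hgapx' c hcL)
        omega
      · -- use ih1 shifted by len x'
        refine ih1 (ℓ - len x') δ hδ ?_ (Or.inl ⟨by omega, by omega⟩)
        intro c hcL
        have := hgap _ (hgapx c hcL)
        omega
    · rw [← hay] at ha; rw [← hax] at hb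
      rcases hmidcase with hc | hc
      · -- use ih1 shifted by len x', reversed
        refine ih1 (ℓ - len x') δ hδ ?_ (Or.inr ⟨by omega, by omega⟩)
        intro c hcL
        have := hgap _ (hgapx c hcL)
        omega
      · -- use ih2 shifted by len y, reversed
        refine ih2 (ℓ - len y) δ hδ ?_ (Or.inr ⟨by omega, by omega⟩)
        intro c hcL
        have := hgap _ (hgapx' c hcL)
        omega

end Stmt1Aux


/-- If `Γ = ⟨α_1,…,α_k⟩ ⊂ ℕ^d` is minimally generated by `α_1,…,α_k`, `ρ` is a
minimal presentation of `Γ`, and `Δ(Γ) ≠ ∅`, then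
`max Δ(Γ) = max{ max Δ(φ_Γ(z)) : (z,w) ∈ ρ, Δ(φ_Γ(z)) ≠ ∅ }`.
(The right-hand side is expressed as the supremum of the union of the delta
sets `Δ(φ_Γ(z))` for `(z,w) ∈ ρ`.) -/
theorem stmt1 {d k : ℕ} (α : Fin k → Fin d → ℕ)
    (hne : ∀ i, α i ≠ 0)
    (hmin : ∀ i, α i ∉ AddSubmonoid.closure (α '' {j | j ≠ i}))
    (ρ : Finset ((Fin k → ℕ) × (Fin k → ℕ)))
    (hρgen : addConGen (fun x y => (x, y) ∈ ρ) = kerCon α)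
    (hρmin : ∀ ρ' ⊆ ρ, addConGen (fun x y => (x, y) ∈ ρ') = kerCon α → ρ' = ρ)
    (hΔ : (deltaSet α).Nonempty) :
    sSup (deltaSet α) =
      sSup (⋃ p ∈ (ρ : Set ((Fin k → ℕ) × (Fin k → ℕ))),
        deltaOf (lengthSet α (phi α p.1))) := by
  classical
  set R : Set ℕ := ⋃ p ∈ (ρ : Set ((Fin k → ℕ) × (Fin k → ℕ))),
      deltaOf (lengthSet α (phi α p.1)) with hRdef
  have hsub : R ⊆ deltaSet α := by
    intro x hx
    obtain ⟨p, hp, hx⟩ := Set.mem_iUnion₂.1 hx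
    exact Set.mem_biUnion ⟨p.1, rfl⟩ hx
  have hkey : ∀ δ ∈ deltaSet α, ∃ δ' ∈ R, δ ≤ δ' := by
    intro δ hδmem
    obtain ⟨γ, hγ, hδγ⟩ := Set.mem_iUnion₂.1 hδmem
    obtain ⟨z0, rfl⟩ := hγ
    obtain ⟨hpos, a, ⟨z, hz, hlz⟩, ⟨w, hw, hlw⟩, hgap⟩ := hδγ
    have hzw : phi α z = phi α w := hz.trans hw.symm
    have hrel : AddConGen.Rel (fun x y => (x, y) ∈ ρ) z w := by
      have h' : (addConGen (fun x y => (x, y) ∈ ρ)) z w := by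
        rw [hρgen]; exact hzw
      exact h'
    have hgap' : ∀ c ∈ lengthSet α (phi α z), ¬(a < c ∧ c < a + δ) := by
      rw [show phi α z = phi α z0 from hz]; exact hgap
    exact Stmt1Aux.key α ρ hρgen hrel a δ hpos hgap'
      (Or.inl ⟨le_of_eq hlz, le_of_eq hlw.symm⟩)
  by_cases hbddR : BddAbove R
  · have hbddD : BddAbove (deltaSet α) := by
      obtain ⟨M, hM⟩ := hbddR
      refine ⟨M, fun x hx => ?_⟩
      obtain ⟨δ', hδ', hle⟩ := hkey x hx
      exact hle.trans (hM hδ')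
    have hRne : R.Nonempty := by
      obtain ⟨δ, hδmem⟩ := hΔ
      obtain ⟨δ', hδ', _⟩ := hkey δ hδmem
      exact ⟨δ', hδ'⟩
    refine le_antisymm ?_ (csSup_le_csSup hbddD hRne hsub)
    refine csSup_le hΔ fun δ hδmem => ?_
    obtain ⟨δ', hδ', hle⟩ := hkey δ hδmem
    exact hle.trans (le_csSup hbddR hδ')
  · have hbddD : ¬BddAbove (deltaSet α) := by
      intro ⟨M, hM⟩
      exact hbddR ⟨M, fun x hx => hM (hsub hx)⟩
    rw [csSup_of_not_bddAbove hbddD, csSup_of_not_bddAbove hbddR]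
end

section
/- Let G be a finite connected graph with nonnegative integer edge weights, and let T be a spanning tree of G with edge set {e_1, …, e_r}. If the total weight w(e_1) + ⋯ + w(e_r) is minimal among all spanning trees of G, then T is a minimum weight spanning tree of G, i.e., for every pair of vertices v_0, v_r of G, the unique path in T from v_0 to v_r has maximum edge weight less than or equal to the maximum edge weight of every chain (walk) in G from v_0 to v_r. -/
/-- The weight of a walk in an edge-weighted graph: the maximum of the weights
of its edges (`0` for a trivial walk). -/
def walkWeight {V : Type*} (w : Sym2 V → ℕ) {G : SimpleGraph V} {u v : V}
    (p : G.Walk u v) : ℕ :=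
  (p.edges.map w).foldr max 0

/-- The total weight of a graph: the sum of the weights of its edges. -/
noncomputable def totalWeight {V : Type*} [Fintype V] (w : Sym2 V → ℕ)
    (T : SimpleGraph V) : ℕ :=
  ∑ e ∈ (Set.toFinite T.edgeSet).toFinset, w e

/-! Suppose an edge `e` of the tree path `p` from `v₀` to `vᵣ` were heavier than every edge of a
walk `q` from `v₀` to `vᵣ`. Deleting `e` from `T` separates `v₀` from `vᵣ`, so `q` has an edge `f`
joining the two components of `T - e`. Then `T - e + f` is a spanning tree of `G` whose total
weight is smaller than that of `T` by `w e - w f > 0`. -/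

namespace SimpleGraph

variable {V : Type*}

section WalkWeight

variable (w : Sym2 V → ℕ) {G : SimpleGraph V} {u v : V}

lemma walkWeight_le_iff (p : G.Walk u v) (c : ℕ) :
    walkWeight w p ≤ c ↔ ∀ e ∈ p.edges, w e ≤ c := by
  suffices ∀ l : List ℕ, l.foldr max 0 ≤ c ↔ ∀ a ∈ l, a ≤ c by simp [walkWeight, this]
  intro l
  induction l with
  | nil => simp
  | cons a l ih => simp [ih]

lemma le_walkWeight (p : G.Walk u v) {e : Sym2 V} (he : e ∈ p.edges) : w e ≤ walkWeight w p :=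
  (walkWeight_le_iff w p _).1 le_rfl e he

end WalkWeight

section TotalWeight

variable [Fintype V] (w : Sym2 V → ℕ)

lemma totalWeight_deleteEdges_add {T : SimpleGraph V} {e : Sym2 V} (he : e ∈ T.edgeSet) :
    totalWeight w (T.deleteEdges {e}) + w e = totalWeight w T := by
  classical
  have hfin : (Set.toFinite (T.deleteEdges {e}).edgeSet).toFinset =
      (Set.toFinite T.edgeSet).toFinset.erase e := by
    ext f
    simp [and_comm]
  rw [totalWeight, totalWeight, hfin]
  exact Finset.sum_erase_add _ _ (by simpa using he)

lemma totalWeight_sup_edge {H : SimpleGraph V} {x y : V} (hxy : x ≠ y) (hadj : ¬H.Adj x y) :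
    totalWeight w (H ⊔ edge x y) = totalWeight w H + w s(x, y) := by
  classical
  have hfin : (Set.toFinite (H ⊔ edge x y).edgeSet).toFinset =
      insert s(x, y) (Set.toFinite H.edgeSet).toFinset := by
    ext f
    simp [edgeSet_edge_of_ne hxy]
  rw [totalWeight, totalWeight, hfin, Finset.sum_insert (by simpa using hadj), add_comm]

end TotalWeight

lemma reachable_deleteEdges_or_of_reachable {G : SimpleGraph V} {u a : V} (b : V)
    (h : G.Reachable u a) :
    (G.deleteEdges {s(a, b)}).Reachable u a ∨ (G.deleteEdges {s(a, b)}).Reachable u b := by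
  obtain ⟨p⟩ := h
  suffices ∀ {u v} (p : G.Walk u v), v = a →
      (G.deleteEdges {s(a, b)}).Reachable u a ∨ (G.deleteEdges {s(a, b)}).Reachable u b from
    this p rfl
  intro u v p ha
  induction p with
  | nil => exact Or.inl (ha ▸ .rfl)
  | @cons u m _ hadj p ih =>
    by_cases he : s(u, m) = s(a, b)
    · rcases Sym2.eq_iff.1 he with ⟨rfl, -⟩ | ⟨rfl, -⟩
      · exact Or.inl .rfl
      · exact Or.inr .rfl
    · have hadj' : (G.deleteEdges {s(a, b)}).Adj u m := by simp [hadj, he]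
      exact (ih ha).imp hadj'.reachable.trans hadj'.reachable.trans

lemma Connected.deleteEdges_sup_edge {G : SimpleGraph V} (hG : G.Connected) {a b x y : V}
    (hxy : ¬(G.deleteEdges {s(a, b)}).Reachable x y) :
    (G.deleteEdges {s(a, b)} ⊔ edge x y).Connected := by
  set G₀ := G.deleteEdges {s(a, b)}
  have hle : G₀ ≤ G₀ ⊔ edge x y := le_sup_left
  have hne : x ≠ y := by
    rintro rfl
    exact hxy .rfl
  have hxy' : (G₀ ⊔ edge x y).Reachable x y := Adj.reachable (by simp [edge_adj, hne])
  -- in `G₀` every vertex is joined to `a` or to `b`, and `x`, `y` are not joined to the same one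
  have hab : (G₀ ⊔ edge x y).Reachable a b := by
    rcases reachable_deleteEdges_or_of_reachable b (hG x a) with hxa | hxb <;>
    rcases reachable_deleteEdges_or_of_reachable b (hG y a) with hya | hyb
    · exact absurd (hxa.trans hya.symm) hxy
    · exact (hxa.symm.mono hle).trans (hxy'.trans (hyb.mono hle))
    · exact (hya.symm.mono hle).trans (hxy'.symm.trans (hxb.mono hle))
    · exact absurd (hxb.trans hyb.symm) hxy
  refine (connected_iff_exists_forall_reachable _).2 ⟨a, fun u => ?_⟩
  rcases reachable_deleteEdges_or_of_reachable b (hG u a) with hua | hub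
  · exact (hua.mono hle).symm
  · exact hab.trans (hub.mono hle).symm

lemma IsTree.deleteEdges_sup_edge {T : SimpleGraph V} (hT : T.IsTree) {a b x y : V}
    (hxy : ¬(T.deleteEdges {s(a, b)}).Reachable x y) :
    (T.deleteEdges {s(a, b)} ⊔ edge x y).IsTree :=
  ⟨hT.connected.deleteEdges_sup_edge hxy,
    (hT.isAcyclic.anti (deleteEdges_le _)).sup_edge_of_not_reachable hxy⟩

lemma IsAcyclic.not_reachable_deleteEdges_of_mem_edges {T : SimpleGraph V} (hT : T.IsAcyclic)
    {u v : V} {p : T.Walk u v} (hp : p.IsPath) {e : Sym2 V} (he : e ∈ p.edges) :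
    ¬(T.deleteEdges {e}).Reachable u v := by
  classical
  rintro ⟨r⟩
  -- by uniqueness of paths, `p` would be the bypass of `r`, which avoids `e`
  have hsub : ∀ f ∈ r.bypass.edges, f ∈ T.edgeSet := fun f hf =>
    edgeSet_mono (deleteEdges_le _) (r.bypass.edges_subset_edgeSet hf)
  have hpr : p = r.bypass.transfer T hsub :=
    congrArg Subtype.val
      ((hT.subsingleton_path u v).elim ⟨p, hp⟩ ⟨_, r.bypass_isPath.transfer hsub⟩)
  rw [hpr, Walk.edges_transfer] at he
  simpa using r.bypass.edges_subset_edgeSet he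

structure IsMinTotalWeightSpanningTree [Fintype V] (w : Sym2 V → ℕ) (G T : SimpleGraph V) :
    Prop where
  le : T ≤ G
  isTree : T.IsTree
  totalWeight_le : ∀ T', T' ≤ G → T'.IsTree → totalWeight w T ≤ totalWeight w T'

namespace IsMinTotalWeightSpanningTree

variable [Fintype V] {w : Sym2 V → ℕ} {G T : SimpleGraph V}

lemma weight_le_of_not_reachable (hT : IsMinTotalWeightSpanningTree w G T) {a b x y : V}
    (hab : T.Adj a b) (hxy : G.Adj x y) (hcut : ¬(T.deleteEdges {s(a, b)}).Reachable x y) :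
    w s(a, b) ≤ w s(x, y) := by
  have hle : T.deleteEdges {s(a, b)} ⊔ edge x y ≤ G :=
    sup_le ((deleteEdges_le _).trans hT.le) ((edge_le_iff G).2 (Or.inr hxy))
  have hmin := hT.totalWeight_le _ hle (hT.isTree.deleteEdges_sup_edge hcut)
  rw [totalWeight_sup_edge w hxy.ne fun h => hcut h.reachable,
    ← totalWeight_deleteEdges_add w ((mem_edgeSet T).2 hab)] at hmin
  omega

lemma le_walkWeight (hT : IsMinTotalWeightSpanningTree w G T) {u v : V} {p : T.Walk u v}
    (hp : p.IsPath) {e : Sym2 V} (he : e ∈ p.edges) (q : G.Walk u v) : w e ≤ walkWeight w q := by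
  induction e using Sym2.ind with
  | _ a b =>
    have hcut := hT.isTree.isAcyclic.not_reachable_deleteEdges_of_mem_edges hp he
    obtain ⟨d, hd, hfst, hsnd⟩ :=
      q.exists_boundary_dart {x | (T.deleteEdges {s(a, b)}).Reachable u x} .rfl hcut
    calc w s(a, b) ≤ w d.edge :=
          hT.weight_le_of_not_reachable (p.adj_of_mem_edges he) d.adj fun h => hsnd (hfst.trans h)
      _ ≤ walkWeight w q := SimpleGraph.le_walkWeight w q (List.mem_map_of_mem hd)

end IsMinTotalWeightSpanningTree

end SimpleGraph

theorem stmt8_general {V : Type*} [Fintype V] (G : SimpleGraph V) (w : Sym2 V → ℕ)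
    (T : SimpleGraph V) (hTG : T ≤ G) (hT : T.IsTree)
    (hmin : ∀ T' : SimpleGraph V, T' ≤ G → T'.IsTree →
      totalWeight w T ≤ totalWeight w T') :
    ∀ (v₀ vᵣ : V) (p : T.Walk v₀ vᵣ), p.IsPath →
      ∀ q : G.Walk v₀ vᵣ, walkWeight w p ≤ walkWeight w q := by
  intro v₀ vᵣ p hp q
  have hmst : SimpleGraph.IsMinTotalWeightSpanningTree w G T := ⟨hTG, hT, hmin⟩
  exact (SimpleGraph.walkWeight_le_iff w p _).2 fun e he => hmst.le_walkWeight hp he q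

/-- Let `G` be a finite connected graph with nonnegative integer edge weights
`w`, and let `T` be a spanning tree of `G`.  If the total weight of `T` is
minimal among all spanning trees of `G`, then `T` is a minimum weight spanning
tree of `G`: for every pair of vertices, the unique path between them in `T`
has maximum edge weight at most the maximum edge weight of every chain (walk)
in `G` between them. -/
theorem stmt8 {V : Type*} [Fintype V] (G : SimpleGraph V) (w : Sym2 V → ℕ)
    (hG : G.Connected) (T : SimpleGraph V) (hTG : T ≤ G) (hT : T.IsTree)
    (hmin : ∀ T' : SimpleGraph V, T' ≤ G → T'.IsTree →
      totalWeight w T ≤ totalWeight w T') :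
    ∀ (v₀ vᵣ : V) (p : T.Walk v₀ vᵣ), p.IsPath →
      ∀ q : G.Walk v₀ vᵣ, walkWeight w p ≤ walkWeight w q :=
  stmt8_general G w T hTG hT hmin
end
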